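/- arXiv:math/0007049 — 13 statements merged into one kernel-verified Lean document; each statement's English description precedes it below -/
import Mathlib

section
/- If A and B are bounded operators on a complex Hilbert space with AB = λBA (λ ∈ ℂ nonzero) and AB ≠ 0, then 0 belongs to the spectrum of AB if and only if 0 belongs to the spectrum of BA. -/
variable {H : Type*} [NormedAddCommGroup H] [InnerProductSpace ℂ H] [CompleteSpace H]

theorem stmt1 (A B : H →L[ℂ] H) (lam : ℂ) (hlam : lam ≠ 0)
    (h : A * B = lam • (B * A)) (hne : A * B ≠ 0) :
    (0 : ℂ) ∈ spectrum ℂ (A * B) ↔ (0 : ℂ) ∈ spectrum ℂ (B * A) := by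
  rw [spectrum.zero_mem_iff, spectrum.zero_mem_iff, h]
  constructor
  · intro hbu hu
    exact hbu (hu.smul (Units.mk0 lam hlam))
  · intro hbu hu
    apply hbu
    have := hu.smul (Units.mk0 lam hlam)⁻¹
    simpa [Units.smul_def, smul_smul, inv_mul_cancel₀ hlam] using this
end

section
/- If A and B are bounded operators on a complex Hilbert space with AB = λBA (λ ∈ ℂ nonzero) and AB ≠ 0, then σ(AB) = σ(BA) = λ·σ(AB). -/
open Pointwise

namespace spectrum

variable {𝕜 A : Type*} [Field 𝕜] [Ring A] [Algebra 𝕜 A]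

theorem smul_eq_smul_of_ne_zero {k : 𝕜} (hk : k ≠ 0) (a : A) :
    spectrum 𝕜 (k • a) = k • spectrum 𝕜 a :=
  unit_smul_eq_smul a (Units.mk0 k hk)

/-- Away from `0` this is `spectrum.nonzero_mul_comm`; at `0` the relation makes `a * b`
invertible exactly when `b * a` is. -/
theorem eq_mul_comm_of_mul_eq_smul {a b : A} {k : 𝕜} (hk : k ≠ 0) (h : a * b = k • (b * a)) :
    spectrum 𝕜 (a * b) = spectrum 𝕜 (b * a) := by
  ext z
  rcases eq_or_ne z 0 with rfl | hz
  · rw [h, smul_eq_smul_of_ne_zero hk, Set.zero_mem_smul_set_iff hk]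
  · simpa [hz] using Set.ext_iff.mp (nonzero_mul_comm a b) z

end spectrum

variable {H : Type*} [NormedAddCommGroup H] [InnerProductSpace ℂ H] [CompleteSpace H]

theorem stmt2_general (A B : H →L[ℂ] H) (lam : ℂ) (hlam : lam ≠ 0)
    (h : A * B = lam • (B * A)) :
    spectrum ℂ (A * B) = spectrum ℂ (B * A) ∧
    spectrum ℂ (A * B) = lam • spectrum ℂ (A * B) := by
  have hcomm := spectrum.eq_mul_comm_of_mul_eq_smul hlam h
  refine ⟨hcomm, ?_⟩
  calc spectrum ℂ (A * B) = lam • spectrum ℂ (B * A) := by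
        rw [h, spectrum.smul_eq_smul_of_ne_zero hlam]
    _ = lam • spectrum ℂ (A * B) := by rw [hcomm]

theorem stmt2 (A B : H →L[ℂ] H) (lam : ℂ) (hlam : lam ≠ 0)
    (h : A * B = lam • (B * A)) (hne : A * B ≠ 0) :
    spectrum ℂ (A * B) = spectrum ℂ (B * A) ∧
    spectrum ℂ (A * B) = lam • spectrum ℂ (A * B) :=
  stmt2_general A B lam hlam h
end

section
/- If A and B are bounded operators on a complex Hilbert space with AB = λBA, AB ≠ 0, and σ(AB) ≠ {0}, then |λ| = 1. -/
/-!
The nonzero spectra of `a * b` and `b * a` coincide, so the two products have the same spectral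
radius `r`; and scaling an element by `c` scales its spectral radius by `‖c‖`. Hence
`a * b = c • (b * a)` gives `r = ‖c‖ * r`, and `r` is positive (the spectrum has a nonzero point)
and finite (the spectrum is compact), so `‖c‖ = 1`.
-/

open scoped NNReal ENNReal Pointwise

namespace spectrum

variable {𝕜 A : Type*} [NormedField 𝕜]

section Algebra

variable [Ring A] [Algebra 𝕜 A]

theorem spectralRadius_mul_comm_le (a b : A) :
    spectralRadius 𝕜 (a * b) ≤ spectralRadius 𝕜 (b * a) := by
  refine iSup₂_le fun k hk => ?_
  rcases eq_or_ne k 0 with rfl | hk0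
  · simp
  · have hk' : k ∈ spectrum 𝕜 (b * a) \ {0} := nonzero_mul_comm (𝕜 := 𝕜) a b ▸ ⟨hk, hk0⟩
    exact le_iSup₂ (α := ℝ≥0∞) k hk'.1

theorem spectralRadius_mul_comm (a b : A) :
    spectralRadius 𝕜 (a * b) = spectralRadius 𝕜 (b * a) :=
  (spectralRadius_mul_comm_le a b).antisymm (spectralRadius_mul_comm_le b a)

theorem spectralRadius_smul (c : 𝕜) (a : A) :
    spectralRadius 𝕜 (c • a) = ‖c‖₊ * spectralRadius 𝕜 a := by
  rcases eq_or_ne c 0 with rfl | hc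
  · simp
  · have hσ : spectrum 𝕜 (c • a) = c • spectrum 𝕜 a := unit_smul_eq_smul a (Units.mk0 c hc)
    simp only [spectralRadius, hσ, ← Set.image_smul, iSup_image, nnnorm_smul, ENNReal.coe_mul,
      ENNReal.mul_iSup]

end Algebra

theorem norm_eq_one_of_mul_eq_smul_mul [NormedRing A] [NormedAlgebra 𝕜 A] [CompleteSpace A]
    [ProperSpace 𝕜] {a b : A} {c : 𝕜} (h : a * b = c • (b * a)) {k : 𝕜}
    (hk : k ∈ spectrum 𝕜 (a * b)) (hk0 : k ≠ 0) : ‖c‖ = 1 := by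
  obtain ⟨k₀, -, hk₀⟩ := exists_nnnorm_eq_spectralRadius_of_nonempty ⟨k, hk⟩
  have hr : spectralRadius 𝕜 (a * b) = ‖c‖₊ * spectralRadius 𝕜 (a * b) := by
    conv_lhs => rw [h, spectralRadius_smul, ← spectralRadius_mul_comm]
  have hr0 : spectralRadius 𝕜 (a * b) ≠ 0 :=
    ((ENNReal.coe_pos.mpr (nnnorm_pos.mpr hk0)).trans_le (le_iSup₂ (α := ℝ≥0∞) k hk)).ne'
  rw [← hk₀] at hr hr0
  norm_cast at hr hr0
  rw [← coe_nnnorm, (mul_eq_right₀ hr0).mp hr.symm, NNReal.coe_one]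

end spectrum

variable {H : Type*} [NormedAddCommGroup H] [InnerProductSpace ℂ H] [CompleteSpace H]

theorem stmt3 (A B : H →L[ℂ] H) (lam : ℂ)
    (h : A * B = lam • (B * A)) (hne : A * B ≠ 0)
    (hspec : spectrum ℂ (A * B) ≠ {0}) : ‖lam‖ = 1 := by
  have : Nontrivial (H →L[ℂ] H) := nontrivial_of_ne _ _ hne
  obtain ⟨k, hk, hk0⟩ : ∃ k ∈ spectrum ℂ (A * B), k ≠ 0 := by
    by_contra! hzero
    exact hspec (Set.eq_singleton_iff_nonempty_unique_mem.mpr ⟨spectrum.nonempty _, hzero⟩)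
  exact spectrum.norm_eq_one_of_mul_eq_smul_mul h hk hk0
end

section
/- If A and B are bounded operators on a complex Hilbert space with AB = λBA and 0 ∉ σ(AB), then both A and B are invertible (have bounded inverses). -/
lemma isUnit_of_left_right_inv {M : Type*} [Monoid M] {a b c : M}
    (hba : b * a = 1) (hac : a * c = 1) : IsUnit a := by
  have hbc : b = c := by
    calc b = b * (a * c) := by rw [hac, mul_one]
    _ = (b * a) * c := by rw [mul_assoc]
    _ = c := by rw [hba, one_mul]
  exact ⟨⟨a, c, hac, hbc ▸ hba⟩, rfl⟩

variable {H : Type*} [NormedAddCommGroup H] [InnerProductSpace ℂ H] [CompleteSpace H]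

theorem stmt5 (A B : H →L[ℂ] H) (lam : ℂ)
    (h : A * B = lam • (B * A)) (h0 : (0 : ℂ) ∉ spectrum ℂ (A * B)) :
    IsUnit A ∧ IsUnit B := by
  have hAB : IsUnit (A * B) := by
    by_contra hc
    exact h0 (by simpa using (spectrum.zero_mem_iff ℂ).mpr hc)
  rcases subsingleton_or_nontrivial (H →L[ℂ] H) with hs | hs
  · exact ⟨isUnit_of_subsingleton A, isUnit_of_subsingleton B⟩
  have hlam : lam ≠ 0 := by
    rintro rfl
    rw [zero_smul] at h
    rw [h] at hAB
    exact not_isUnit_zero hAB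
  have hBA : IsUnit (B * A) := by
    have heq : B * A = lam⁻¹ • (A * B) := by
      rw [h, smul_smul, inv_mul_cancel₀ hlam, one_smul]
    rw [heq, Algebra.smul_def]
    exact ((IsUnit.mk0 lam⁻¹ (inv_ne_zero hlam)).map (algebraMap ℂ (H →L[ℂ] H))).mul hAB
  obtain ⟨u, hu⟩ := hAB
  obtain ⟨v, hv⟩ := hBA
  constructor
  · exact isUnit_of_left_right_inv (b := ↑v⁻¹ * B) (c := B * ↑u⁻¹)
      (by rw [mul_assoc, ← hv, Units.inv_mul])
      (by rw [← mul_assoc, ← hu, Units.mul_inv])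
  · exact isUnit_of_left_right_inv (b := ↑u⁻¹ * A) (c := A * ↑v⁻¹)
      (by rw [mul_assoc, ← hu, Units.inv_mul])
      (by rw [← mul_assoc, ← hv, Units.mul_inv])
end

section
/- If A and B are bounded operators on a complex Hilbert space with AB = λBA, AB ≠ 0, and A is self-adjoint, then λ is real. -/
/-!
Taking adjoints in `A B = λ B A` gives `A (B B*) = μ (B B*) A` with `μ = λ / λ̄`. Hence the
nonzero positive operator `E = A B (A B)* = A (B B* A)` equals `μ (B B* A) A`, and since
`σ(xy) \ {0} = σ(yx) \ {0}`, the nonzero spectrum of `E` is invariant under division by `μ`.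
It consists of positive reals and contains `‖E‖`, so `μ` is a positive real, and `λ = μ λ̄`
forces `λ` to be real.
-/

open ComplexOrder

theorem Complex.im_eq_zero_of_eq_pos_mul_star {z μ : ℂ} (hμ : 0 < μ) (h : z = μ * star z) :
    z.im = 0 := by
  obtain ⟨hre, him⟩ := Complex.pos_iff.mp hμ
  have : z.im = μ.re * -z.im := by
    conv_lhs => rw [h]
    simp [Complex.mul_im, ← him]
  nlinarith

theorem spectrum.inv_mul_mem_of_mul_eq_smul_mul {𝕜 R : Type*} [Field 𝕜] [Ring R]
    [Algebra 𝕜 R] {x y : R} {μ t : 𝕜} (h : x * y = μ • (y * x)) (hμ : μ ≠ 0)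
    (ht : t ∈ spectrum 𝕜 (x * y)) (ht0 : t ≠ 0) : μ⁻¹ * t ∈ spectrum 𝕜 (x * y) := by
  have hyx : μ⁻¹ * t ∈ spectrum 𝕜 (y * x) := by
    rw [h, ← Units.val_mk0 hμ, ← Units.smul_def, spectrum.unit_smul_eq_smul,
      Set.mem_smul_set_iff_inv_smul_mem] at ht
    simpa [Units.smul_def] using ht
  have hyx' : μ⁻¹ * t ∈ spectrum 𝕜 (y * x) \ {0} :=
    ⟨hyx, mul_ne_zero (inv_ne_zero hμ) ht0⟩
  rw [← spectrum.nonzero_mul_comm] at hyx'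
  exact hyx'.1

theorem IsSelfAdjoint.mul_mul_star_eq_smul {R : Type*} [Ring R] [StarRing R] [Algebra ℂ R]
    [StarModule ℂ R] {a b : R} {lam : ℂ} (ha : IsSelfAdjoint a) (h : a * b = lam • (b * a))
    (hlam : lam ≠ 0) : a * (b * star b) = (lam / star lam) • (b * star b * a) := by
  have hstar : star b * a = star lam • (a * star b) := by
    simpa [star_mul, star_smul, ha.star_eq] using congrArg star h
  have hadj : a * star b = (star lam)⁻¹ • (star b * a) := by
    rw [hstar, smul_smul, inv_mul_cancel₀ (star_ne_zero.mpr hlam), one_smul]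
  calc a * (b * star b) = lam • (b * (a * star b)) := by
        rw [← mul_assoc, h, smul_mul_assoc, mul_assoc]
    _ = (lam / star lam) • (b * star b * a) := by
      rw [hadj, mul_smul_comm, smul_smul, div_eq_mul_inv, mul_assoc]

theorem CStarAlgebra.exists_pos_mem_spectrum_of_nonneg {A : Type*} [CStarAlgebra A]
    [PartialOrder A] [StarOrderedRing A] {a : A} (ha : 0 ≤ a) (ha0 : a ≠ 0) :
    ∃ t ∈ spectrum ℂ a, 0 < t := by
  have : Nontrivial A := nontrivial_of_ne a 0 ha0
  refine ⟨‖a‖, ?_, by exact_mod_cast norm_pos_iff.mpr ha0⟩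
  exact (spectrum.algebraMap_mem_iff ℂ).mpr (norm_mem_spectrum_of_nonneg ha)

theorem IsSelfAdjoint.im_eq_zero_of_mul_eq_smul_mul {A : Type*} [CStarAlgebra A]
    [PartialOrder A] [StarOrderedRing A] {a b : A} {lam : ℂ} (ha : IsSelfAdjoint a)
    (h : a * b = lam • (b * a)) (hab : a * b ≠ 0) : lam.im = 0 := by
  have hlam : lam ≠ 0 := by
    rintro rfl
    exact hab (by simpa using h)
  set μ := lam / star lam with hμ
  have hμ0 : μ ≠ 0 := div_ne_zero hlam (star_ne_zero.mpr hlam)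
  have hE : a * (b * star b * a) = μ • (b * star b * a * a) := by
    rw [← mul_assoc, ha.mul_mul_star_eq_smul h hlam, smul_mul_assoc]
  have hEab : a * (b * star b * a) = a * b * star (a * b) := by
    rw [star_mul, ha.star_eq, mul_assoc, mul_assoc]
  have hEnn : 0 ≤ a * (b * star b * a) := hEab ▸ mul_star_self_nonneg (a * b)
  obtain ⟨t, ht, ht0⟩ := CStarAlgebra.exists_pos_mem_spectrum_of_nonneg hEnn
    (hEab ▸ (CStarRing.mul_star_self_ne_zero_iff _).mpr hab)
  have hs := spectrum.inv_mul_mem_of_mul_eq_smul_mul hE hμ0 ht ht0.ne'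
  have hs0 : 0 < μ⁻¹ * t :=
    (spectrum_nonneg_of_nonneg hEnn hs).lt_of_ne (mul_ne_zero (inv_ne_zero hμ0) ht0.ne').symm
  have hμpos : 0 < μ := inv_pos.mp (by simpa [ht0.ne'] using div_pos hs0 ht0)
  exact Complex.im_eq_zero_of_eq_pos_mul_star hμpos
    (by rw [hμ, div_mul_cancel₀ _ (star_ne_zero.mpr hlam)])

variable {H : Type*} [NormedAddCommGroup H] [InnerProductSpace ℂ H] [CompleteSpace H]

theorem stmt6 (A B : H →L[ℂ] H) (lam : ℂ)
    (hA : IsSelfAdjoint A)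
    (h : A * B = lam • (B * A)) (hne : A * B ≠ 0) : lam.im = 0 :=
  hA.im_eq_zero_of_mul_eq_smul_mul h hne
end

section
/- If A and B are bounded self-adjoint operators on a complex Hilbert space with AB = λBA and AB ≠ 0, then λ = 1 or λ = -1. -/
/-!
Taking adjoints in `AB = λ BA` gives `BA = λ̄ AB`, so `|λ| = 1` because `AB ≠ 0`.
Moreover `A²B² = λ² (AB)(BA)`, while `A²B² = A · (AB²)` has the same nonzero spectrum as
`(AB²)A = (BA)*(BA)`, a nonzero positive operator. Hence multiplication by `λ²` maps a positive
spectral point of `(BA)*(BA)` to a nonnegative one, so `λ²` is a nonnegative real of modulus one: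
`λ² = 1`.
-/

open ComplexOrder

theorem Complex.eq_one_of_nonneg_of_norm_eq_one {c : ℂ} (h : 0 ≤ c) (hc : ‖c‖ = 1) : c = 1 := by
  obtain ⟨hre, him⟩ := Complex.nonneg_iff.mp h
  have hc_re : c = (c.re : ℂ) := Complex.ext rfl (by simp [him])
  rw [hc_re, Complex.norm_real, Real.norm_of_nonneg hre] at hc
  rw [hc_re, hc, Complex.ofReal_one]

theorem Complex.nonneg_of_mul_nonneg_of_pos {c z : ℂ} (h : 0 ≤ c * z) (hz : 0 < z) : 0 ≤ c := by
  simpa only [mul_div_cancel_right₀ _ hz.ne'] using div_nonneg h hz.le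

section Commutation

variable {R : Type*} [Ring R] [Algebra ℂ R] {a b : R} {c : ℂ}

theorem mul_mul_mul_eq_sq_smul_of_mul_eq_smul (h : a * b = c • (b * a)) :
    a * (a * b * b) = c ^ 2 • (a * b * (b * a)) := by
  calc a * (a * b * b) = a * (a * b) * b := by noncomm_ring
    _ = c • (a * (b * a) * b) := by rw [h, mul_smul_comm, smul_mul_assoc]
    _ = c • (a * b * (a * b)) := by simp only [mul_assoc]
    _ = c • (a * b * (c • (b * a))) := by rw [← h]
    _ = c ^ 2 • (a * b * (b * a)) := by rw [mul_smul_comm, smul_smul, sq]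

variable [StarRing R] [StarModule ℂ R]

theorem IsSelfAdjoint.mul_comm_eq_star_smul (ha : IsSelfAdjoint a) (hb : IsSelfAdjoint b)
    (h : a * b = c • (b * a)) : b * a = star c • (a * b) := by
  simpa only [star_mul, ha.star_eq, hb.star_eq, star_smul] using congrArg star h

theorem IsSelfAdjoint.norm_eq_one_of_mul_eq_smul (ha : IsSelfAdjoint a) (hb : IsSelfAdjoint b)
    (h : a * b = c • (b * a)) (hne : a * b ≠ 0) : ‖c‖ = 1 := by
  have hab : a * b = (c * star c) • (a * b) := by
    conv_lhs => rw [h, ha.mul_comm_eq_star_smul hb h, smul_smul]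
  have hcc : c * star c = 1 :=
    smul_left_injective ℂ hne (hab.symm.trans (one_smul ℂ _).symm)
  rw [Complex.star_def, Complex.mul_conj, ← Complex.ofReal_one, Complex.ofReal_inj,
    Complex.normSq_eq_norm_sq] at hcc
  exact (pow_eq_one_iff_of_nonneg (norm_nonneg c) two_ne_zero).mp hcc

end Commutation

section CStarAlgebra

variable {𝒜 : Type*} [CStarAlgebra 𝒜] [PartialOrder 𝒜] [StarOrderedRing 𝒜]

theorem exists_mem_spectrum_ne_zero_of_nonneg {p : 𝒜} (hp : 0 ≤ p) (hp0 : p ≠ 0) :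
    ∃ z ∈ spectrum ℂ p, z ≠ 0 := by
  by_contra! hc
  exact hp0 (CFC.eq_zero_of_spectrum_subset_zero (R := ℂ) p hc)

theorem eq_one_of_spectrum_smul_subset {p : 𝒜} {c : ℂ} (hp : 0 ≤ p) (hp0 : p ≠ 0) (hc : ‖c‖ = 1)
    (hspec : spectrum ℂ (c • p) \ {0} ⊆ spectrum ℂ p) : c = 1 := by
  obtain ⟨z, hz, hz0⟩ := exists_mem_spectrum_ne_zero_of_nonneg hp hp0
  have hc0 : c ≠ 0 := by rintro rfl; simp at hc
  have hcz : c * z ∈ spectrum ℂ p :=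
    hspec ⟨spectrum.smul_mem_smul_iff (r := Units.mk0 c hc0) |>.mpr hz, mul_ne_zero hc0 hz0⟩
  have hz_pos : 0 < z := (spectrum_nonneg_of_nonneg hp hz).lt_of_ne' hz0
  exact Complex.eq_one_of_nonneg_of_norm_eq_one
    (Complex.nonneg_of_mul_nonneg_of_pos (spectrum_nonneg_of_nonneg hp hcz) hz_pos) hc

theorem IsSelfAdjoint.sq_eq_one_of_mul_eq_smul {a b : 𝒜} {c : ℂ} (ha : IsSelfAdjoint a)
    (hb : IsSelfAdjoint b) (h : a * b = c • (b * a)) (hne : a * b ≠ 0) : c ^ 2 = 1 := by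
  have hba : b * a ≠ 0 := fun h0 => hne (by rw [h, h0, smul_zero])
  have hstar : star (b * a) = a * b := by rw [star_mul, ha.star_eq, hb.star_eq]
  refine eq_one_of_spectrum_smul_subset (star_mul_self_nonneg (b * a))
    ((CStarRing.star_mul_self_ne_zero_iff _).mpr hba)
    (by rw [norm_pow, ha.norm_eq_one_of_mul_eq_smul hb h hne, one_pow]) ?_
  rw [hstar, ← mul_mul_mul_eq_sq_smul_of_mul_eq_smul h, spectrum.nonzero_mul_comm]
  exact fun z hz => by simpa only [mul_assoc] using hz.1

end CStarAlgebra

variable {H : Type*} [NormedAddCommGroup H] [InnerProductSpace ℂ H] [CompleteSpace H]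

theorem stmt7 (A B : H →L[ℂ] H) (lam : ℂ)
    (hA : IsSelfAdjoint A) (hB : IsSelfAdjoint B)
    (h : A * B = lam • (B * A)) (hne : A * B ≠ 0) :
    lam = 1 ∨ lam = -1 :=
  sq_eq_one_iff.mp (hA.sq_eq_one_of_mul_eq_smul hB h hne)
end

section
/- If A and B are bounded self-adjoint operators on a complex Hilbert space with AB = λBA, AB ≠ 0, and A is positive (i.e., A ≥ 0), then λ = 1, i.e., A and B commute. -/
/-!
Taking adjoints in `AB = λBA` gives `BA = λ̄AB`, so `|λ| = 1`, and for a square root `μ` of `λ̄`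
the operator `μAB` is self-adjoint and nonzero, hence has a nonzero (real) spectral value `μw`
with `w ∈ σ(AB)`. Since `σ(AB) \ {0} = σ(√A B √A) \ {0}` is real, `μ` is real, so `λ̄ = μ² = |μ|² = 1`.
-/

open ComplexConjugate

section StarModule

variable {𝒜 : Type*} [Ring 𝒜] [StarRing 𝒜] [Module ℂ 𝒜] [StarModule ℂ 𝒜] {a b : 𝒜} {c : ℂ}

lemma IsSelfAdjoint.mul_comm_eq_conj_smul (ha : IsSelfAdjoint a) (hb : IsSelfAdjoint b)
    (h : a * b = c • (b * a)) : b * a = conj c • (a * b) := by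
  simpa [star_mul, ha.star_eq, hb.star_eq] using congrArg star h

lemma IsSelfAdjoint.norm_eq_one_of_mul_eq_smul_mul (ha : IsSelfAdjoint a) (hb : IsSelfAdjoint b)
    (h : a * b = c • (b * a)) (hab : a * b ≠ 0) : ‖c‖ = 1 := by
  have hsmul : (c * conj c) • (a * b) = (1 : ℂ) • (a * b) := by
    rw [one_smul, mul_smul, ← ha.mul_comm_eq_conj_smul hb h, ← h]
  have hc : (‖c‖ ^ 2 : ℂ) = 1 := Complex.mul_conj' c ▸ smul_left_injective ℂ hab hsmul
  exact (pow_eq_one_iff_of_nonneg (norm_nonneg c) two_ne_zero).mp (by exact_mod_cast hc)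

lemma isSelfAdjoint_smul_of_star_eq_sq_smul {t : 𝒜} {μ : ℂ} (ht : star t = μ ^ 2 • t)
    (hμ : ‖μ‖ = 1) : IsSelfAdjoint (μ • t) := by
  rw [IsSelfAdjoint, star_smul, ht, smul_smul, Complex.star_def]
  congr 1
  calc conj μ * μ ^ 2 = (conj μ * μ) * μ := by ring
    _ = μ := by rw [Complex.conj_mul', hμ]; simp

end StarModule

section CStarAlgebra

variable {𝒜 : Type*} [CStarAlgebra 𝒜]

lemma IsStarNormal.exists_mem_spectrum_ne_zero {a : 𝒜} [IsStarNormal a] (ha : a ≠ 0) :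
    ∃ z ∈ spectrum ℂ a, z ≠ 0 := by
  by_contra! h
  exact ha (CFC.eq_zero_of_spectrum_subset_zero (R := ℂ) a h)

variable [PartialOrder 𝒜] [StarOrderedRing 𝒜]

lemma im_eq_zero_of_mem_spectrum_mul {a b : 𝒜} (ha : 0 ≤ a) (hb : IsSelfAdjoint b) {z : ℂ}
    (hz : z ∈ spectrum ℂ (a * b)) (hz0 : z ≠ 0) : z.im = 0 := by
  have hz' : z ∈ spectrum ℂ (CFC.sqrt a * b * CFC.sqrt a) := by
    have : z ∈ spectrum ℂ (CFC.sqrt a * (CFC.sqrt a * b)) \ {0} := by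
      rw [← mul_assoc, CFC.sqrt_mul_sqrt_self a ha]; exact ⟨hz, hz0⟩
    rw [spectrum.nonzero_mul_comm] at this
    exact this.1
  exact (hb.conjugate_self (CFC.sqrt_nonneg a).isSelfAdjoint).im_eq_zero_of_mem_spectrum hz'

lemma im_eq_zero_of_isSelfAdjoint_smul_mul {a b : 𝒜} {μ : ℂ} (ha : 0 ≤ a) (hb : IsSelfAdjoint b)
    (hμab : IsSelfAdjoint (μ • (a * b))) (hμab0 : μ • (a * b) ≠ 0) : μ.im = 0 := by
  have hμ0 : μ ≠ 0 := left_ne_zero_of_smul hμab0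
  have : IsStarNormal (μ • (a * b)) := hμab.isStarNormal
  obtain ⟨z, hz, hz0⟩ := IsStarNormal.exists_mem_spectrum_ne_zero hμab0
  have hz_im := hμab.im_eq_zero_of_mem_spectrum hz
  rw [← Units.val_mk0 hμ0, ← Units.smul_def, spectrum.unit_smul_eq_smul] at hz
  obtain ⟨w, hw, rfl⟩ := hz
  have hw0 : w ≠ 0 := by rintro rfl; simp at hz0
  have hw_im := im_eq_zero_of_mem_spectrum_mul ha hb hw hw0
  have hw_re : w.re ≠ 0 := fun h ↦ hw0 (Complex.ext h hw_im)
  simpa [Units.smul_def, Complex.mul_im, hw_im, hw_re] using hz_im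

theorem eq_one_of_nonneg_of_mul_eq_smul_mul {a b : 𝒜} {c : ℂ} (ha : 0 ≤ a)
    (hb : IsSelfAdjoint b) (h : a * b = c • (b * a)) (hab : a * b ≠ 0) : c = 1 := by
  have hc : ‖c‖ = 1 := ha.isSelfAdjoint.norm_eq_one_of_mul_eq_smul_mul hb h hab
  obtain ⟨μ, hμ⟩ : ∃ μ : ℂ, μ ^ 2 = conj c := IsAlgClosed.exists_pow_nat_eq _ two_pos
  have hμ1 : ‖μ‖ = 1 := by
    rw [← pow_eq_one_iff_of_nonneg (norm_nonneg μ) two_ne_zero, ← norm_pow, hμ,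
      Complex.norm_conj, hc]
  have hμab : IsSelfAdjoint (μ • (a * b)) := by
    refine isSelfAdjoint_smul_of_star_eq_sq_smul ?_ hμ1
    rw [star_mul, ha.isSelfAdjoint.star_eq, hb.star_eq, hμ,
      ← ha.isSelfAdjoint.mul_comm_eq_conj_smul hb h]
  have hμ0 : μ ≠ 0 := norm_ne_zero_iff.mp (hμ1 ▸ one_ne_zero)
  have hμ_im := im_eq_zero_of_isSelfAdjoint_smul_mul ha hb hμab (smul_ne_zero hμ0 hab)
  have hc_conj : conj c = 1 := calc
    conj c = conj μ * μ := by rw [← hμ, sq, Complex.conj_eq_iff_im.mpr hμ_im]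
    _ = 1 := by rw [Complex.conj_mul', hμ1]; simp
  simpa using congrArg conj hc_conj

end CStarAlgebra

variable {H : Type*} [NormedAddCommGroup H] [InnerProductSpace ℂ H] [CompleteSpace H]

theorem stmt8 (A B : H →L[ℂ] H) (lam : ℂ)
    (hA : A.IsPositive) (hB : IsSelfAdjoint B)
    (h : A * B = lam • (B * A)) (hne : A * B ≠ 0) :
    lam = 1 ∧ A * B = B * A := by
  have hA' : 0 ≤ A := (ContinuousLinearMap.nonneg_iff_isPositive A).mpr hA
  have hlam : lam = 1 := eq_one_of_nonneg_of_mul_eq_smul_mul hA' hB h hne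
  exact ⟨hlam, by rw [h, hlam, one_smul]⟩
end

section
/- If A and B are bounded operators with AB = λBA, AB ≠ 0, and A has a bounded inverse, then σ(B) = λ·σ(B). -/
open Pointwise

variable {H : Type*} [NormedAddCommGroup H] [InnerProductSpace ℂ H] [CompleteSpace H]

theorem stmt10 (A B : H →L[ℂ] H) (lam : ℂ)
    (h : A * B = lam • (B * A)) (hne : A * B ≠ 0) (hAinv : IsUnit A) :
    spectrum ℂ B = lam • spectrum ℂ B := by
  have hlam : lam ≠ 0 := by
    rintro rfl
    simp at h
    exact hne h
  lift A to (H →L[ℂ] H)ˣ using hAinv with u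
  have key : (u : H →L[ℂ] H) * B * ↑u⁻¹ = lam • B := by
    rw [h]
    ext x
    simp [mul_smul_comm, smul_mul_assoc, mul_assoc]
  calc spectrum ℂ B = spectrum ℂ ((u : H →L[ℂ] H) * B * ↑u⁻¹) :=
        (spectrum.units_conjugate).symm
    _ = spectrum ℂ (lam • B) := by rw [key]
    _ = lam • spectrum ℂ B := spectrum.unit_smul_eq_smul B (Units.mk0 lam hlam)
end

section
/- If A and B are bounded operators with AB = λBA, AB ≠ 0, A has a bounded inverse, and σ(B) ≠ {0}, then |λ| = 1. -/
/-!
Conjugating by `A` gives `A B A⁻¹ = λ B`, so `σ(B) = λ • σ(B)`. The spectrum is bounded and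
contains some `μ ≠ 0`; the orbit `λ ^ n μ` stays in it for all `n ∈ ℤ`, which forces `|λ| = 1`.
-/

open Pointwise Bornology

section SmulInvariantSet

variable {𝕜 : Type*} [NormedDivisionRing 𝕜] {S : Set 𝕜} {c μ : 𝕜}

lemma norm_le_one_of_smul_set_subset (hS : IsBounded S) (hc : c • S ⊆ S) (hμ : μ ∈ S)
    (hμ0 : μ ≠ 0) : ‖c‖ ≤ 1 := by
  have hpow : ∀ n : ℕ, c ^ n * μ ∈ S := by
    intro n
    induction n with
    | zero => simpa using hμ
    | succ n ih =>
      rw [pow_succ', mul_assoc]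
      exact hc (Set.smul_mem_smul_set ih)
  obtain ⟨R, hR⟩ := hS.exists_norm_le
  by_contra! hgt
  obtain ⟨n, hn⟩ := pow_unbounded_of_one_lt (R / ‖μ‖) hgt
  have hμpos : 0 < ‖μ‖ := norm_pos_iff.mpr hμ0
  have := hR _ (hpow n)
  rw [norm_mul, norm_pow] at this
  rw [div_lt_iff₀ hμpos] at hn
  linarith

lemma norm_eq_one_of_smul_set_eq (hS : IsBounded S) (hc : c • S = S) (hμ : μ ∈ S)
    (hμ0 : μ ≠ 0) : ‖c‖ = 1 := by
  have hc0 : c ≠ 0 := by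
    rintro rfl
    rw [Set.zero_smul_set ⟨μ, hμ⟩] at hc
    exact hμ0 (Set.mem_zero.mp (hc ▸ hμ))
  have hinv : c⁻¹ • S ⊆ S := (Set.subset_smul_set_iff₀ hc0).mp hc.superset
  refine le_antisymm (norm_le_one_of_smul_set_subset hS hc.subset hμ hμ0) ?_
  have := norm_le_one_of_smul_set_subset hS hinv hμ hμ0
  rwa [norm_inv, inv_le_one₀ (norm_pos_iff.mpr hc0)] at this

end SmulInvariantSet

lemma spectrum_smul_eq_of_mul_eq_smul_mul {R A : Type*} [CommSemiring R] [Ring A] [Algebra R A]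
    {a b : A} {c : R} (ha : IsUnit a) (h : a * b = c • (b * a)) :
    spectrum R (c • b) = spectrum R b := by
  obtain ⟨u, rfl⟩ := ha
  have : c • b = u * b * ↑u⁻¹ := by
    rw [h, smul_mul_assoc, mul_assoc, Units.mul_inv, mul_one]
  rw [this, spectrum.units_conjugate]

lemma spectrum.exists_ne_zero_of_ne_singleton_zero {A : Type*} [NormedRing A] [NormedAlgebra ℂ A]
    [CompleteSpace A] [Nontrivial A] {b : A} (hb : spectrum ℂ b ≠ {0}) :
    ∃ μ ∈ spectrum ℂ b, μ ≠ 0 := by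
  by_contra! h
  exact hb ((spectrum.nonempty b).subset_singleton_iff.mp h)

variable {H : Type*} [NormedAddCommGroup H] [InnerProductSpace ℂ H] [CompleteSpace H]

theorem stmt11 (A B : H →L[ℂ] H) (lam : ℂ)
    (h : A * B = lam • (B * A)) (hne : A * B ≠ 0) (hAinv : IsUnit A)
    (hspec : spectrum ℂ B ≠ {0}) : ‖lam‖ = 1 := by
  have : Nontrivial (H →L[ℂ] H) := nontrivial_of_ne _ _ hne
  obtain ⟨μ, hμ, hμ0⟩ := spectrum.exists_ne_zero_of_ne_singleton_zero hspec
  have hσ : lam • spectrum ℂ B = spectrum ℂ B := by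
    rw [← spectrum.smul_eq_smul lam B ⟨μ, hμ⟩]
    exact spectrum_smul_eq_of_mul_eq_smul_mul hAinv h
  exact norm_eq_one_of_smul_set_eq (spectrum.isBounded B) hσ hμ hμ0
end

section
/- If A and B are bounded operators with AB = λBA, AB ≠ 0, and A is unitary, then |λ| = 1. -/
variable {H : Type*} [NormedAddCommGroup H] [InnerProductSpace ℂ H] [CompleteSpace H]

theorem norm_eq_one_of_unitary_mul_eq_smul_mul {𝕜 E : Type*} [SeminormedRing 𝕜] [NormedRing E]
    [StarRing E] [CStarRing E] [Module 𝕜 E] [NormSMulClass 𝕜 E] {u b : E} {c : 𝕜}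
    (hu : u ∈ unitary E) (h : u * b = c • (b * u)) (hne : u * b ≠ 0) : ‖c‖ = 1 := by
  have hb : ‖b‖ ≠ 0 := by
    rwa [← CStarRing.norm_mem_unitary_mul b hu, norm_ne_zero_iff]
  have key : ‖c‖ * ‖b‖ = ‖b‖ := calc
    ‖c‖ * ‖b‖ = ‖c • (b * u)‖ := by rw [norm_smul, CStarRing.norm_mul_mem_unitary b hu]
    _ = ‖b‖ := by rw [← h, CStarRing.norm_mem_unitary_mul b hu]
  exact (mul_eq_right₀ hb).mp key

theorem stmt12 (A B : H →L[ℂ] H) (lam : ℂ)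
    (hU : A ∈ unitary (H →L[ℂ] H))
    (h : A * B = lam • (B * A)) (hne : A * B ≠ 0) :
    ‖lam‖ = 1 :=
  norm_eq_one_of_unitary_mul_eq_smul_mul hU h hne
end

section
/- Let A, B be n×n complex matrices with AB = λBA and AB ≠ 0. If tr(AB^k) ≠ 0 for some k ≥ 1, then λ = 1. -/
theorem stmt13 (n : ℕ) (A B : Matrix (Fin n) (Fin n) ℂ) (lam : ℂ)
    (h : A * B = lam • (B * A)) (hne : A * B ≠ 0)
    (htr : ∃ k : ℕ, 1 ≤ k ∧ (A * B ^ k).trace ≠ 0) : lam = 1 := by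
  obtain ⟨k, hk, ht⟩ := htr
  obtain ⟨m, rfl⟩ : ∃ m, k = m + 1 := ⟨k - 1, by omega⟩
  have key : (A * B ^ (m + 1)).trace = lam * (A * B ^ (m + 1)).trace := calc
    (A * B ^ (m + 1)).trace = ((A * B) * B ^ m).trace := by
      rw [mul_assoc, ← pow_succ']
    _ = (B ^ m * (A * B)).trace := Matrix.trace_mul_comm _ _
    _ = (B ^ m * (lam • (B * A))).trace := by rw [h]
    _ = lam * (B ^ (m + 1) * A).trace := by
      rw [Matrix.mul_smul, Matrix.trace_smul, ← mul_assoc, ← pow_succ, smul_eq_mul]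
    _ = lam * (A * B ^ (m + 1)).trace := by rw [Matrix.trace_mul_comm]
  have hz : (lam - 1) * (A * B ^ (m + 1)).trace = 0 := by linear_combination -key
  rcases mul_eq_zero.mp hz with h0 | h0
  · exact sub_eq_zero.mp h0
  · exact absurd h0 ht
end

section
/- Let A, B be bounded self-adjoint operators on a complex Hilbert space. Then AB²A = BA²B if and only if AB² = B²A and BA² = A²B. -/
/-!
If `a` and `b` are self-adjoint and `a b² a = b a² b`, then `m = a b` is normal, since
`m m* = a b² a` and `m* m = b a² b`. Both `a` and `b` intertwine `m` and `m*`
(`a m* = m a` and `b m = m* b`), so by the Fuglede–Putnam–Rosenblum theorem they also intertwine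
the adjoints, which spells out as `a² b = b a²` and `b² a = a b²`.
-/

section

variable {𝒜 : Type*} [CStarAlgebra 𝒜] {a b : 𝒜}

lemma IsSelfAdjoint.isStarNormal_mul_of_mul_sq_mul_eq (ha : IsSelfAdjoint a)
    (hb : IsSelfAdjoint b) (h : a * b ^ 2 * a = b * a ^ 2 * b) : IsStarNormal (a * b) := by
  rw [isStarNormal_iff, commute_iff_eq, star_mul, ha.star_eq, hb.star_eq]
  calc b * a * (a * b) = b * a ^ 2 * b := by noncomm_ring
    _ = a * b ^ 2 * a := h.symm
    _ = a * b * (b * a) := by noncomm_ring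

lemma IsSelfAdjoint.mul_sq_mul_eq_iff (ha : IsSelfAdjoint a) (hb : IsSelfAdjoint b) :
    a * b ^ 2 * a = b * a ^ 2 * b ↔ a * b ^ 2 = b ^ 2 * a ∧ b * a ^ 2 = a ^ 2 * b := by
  constructor
  · intro h
    have hm := ha.isStarNormal_mul_of_mul_sq_mul_eq hb h
    have hm_star : star (a * b) = b * a := by rw [star_mul, ha.star_eq, hb.star_eq]
    have ha_int : SemiconjBy a (star (a * b)) (a * b) := by
      rw [hm_star, SemiconjBy]; noncomm_ring
    have hb_int : SemiconjBy b (a * b) (star (a * b)) := by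
      rw [hm_star, SemiconjBy]; noncomm_ring
    have ha_int_star := ha_int.star_right hm.star hm
    have hb_int_star := hb_int.star_right hm hm.star
    rw [star_star, hm_star, SemiconjBy] at ha_int_star hb_int_star
    constructor
    · calc a * b ^ 2 = a * b * b := by noncomm_ring
        _ = b * (b * a) := hb_int_star.symm
        _ = b ^ 2 * a := by noncomm_ring
    · calc b * a ^ 2 = b * a * a := by noncomm_ring
        _ = a * (a * b) := ha_int_star.symm
        _ = a ^ 2 * b := by noncomm_ring
  · rintro ⟨hab, hba⟩
    calc a * b ^ 2 * a = b * (b * a ^ 2) := by rw [hab]; noncomm_ring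
      _ = b * (a ^ 2 * b) := by rw [hba]
      _ = b * a ^ 2 * b := (mul_assoc _ _ _).symm

end

variable {H : Type*} [NormedAddCommGroup H] [InnerProductSpace ℂ H] [CompleteSpace H]

theorem stmt17 (A B : H →L[ℂ] H)
    (hA : IsSelfAdjoint A) (hB : IsSelfAdjoint B) :
    A * B ^ 2 * A = B * A ^ 2 * B ↔
    (A * B ^ 2 = B ^ 2 * A ∧ B * A ^ 2 = A ^ 2 * B) :=
  hA.mul_sq_mul_eq_iff hB
end

section
/- Let A, B be bounded self-adjoint operators with A positive. If AB = UBA for some unitary U, then AB = BA. -/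
/-!
Put `T = B * A`. Then `star T = A * B = U * T`, which forces `U` to commute with `T`, so `T` is
normal. With `C = √A`, the nonzero spectrum of `T = (B * C) * C` equals that of the selfadjoint
`C * B * C`, so the spectrum of `T` is real. A normal element with real spectrum is selfadjoint,
hence `A * B = star T = T = B * A`.
-/

lemma IsStarNormal.of_star_eq_unitary_mul {R : Type*} [Monoid R] [StarMul R] {t u : R}
    (hu : u ∈ unitary R) (h : star t = u * t) : IsStarNormal t := by
  have hcomm : t * u = u * t :=
    calc t * u = star (star t) * u := by rw [star_star]
      _ = u * t * (star u * u) := by rw [h, star_mul, ← h, h, mul_assoc]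
      _ = u * t := by rw [Unitary.star_mul_self_of_mem hu, mul_one]
  refine ⟨?_⟩
  change star t * t = t * star t
  rw [h, ← mul_assoc, hcomm]

section CStarAlgebra

variable {A : Type*} [CStarAlgebra A] [PartialOrder A] [StarOrderedRing A]

lemma IsSelfAdjoint.spectrumRestricts_mul_of_nonneg {a b : A} (hb : IsSelfAdjoint b)
    (ha : 0 ≤ a) : SpectrumRestricts (b * a) Complex.reCLM := by
  set c := CFC.sqrt a
  have hcc : c * c = a := CFC.sqrt_mul_sqrt_self a ha
  have hcbc : IsSelfAdjoint (c * (b * c)) := by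
    rw [← mul_assoc]
    exact hb.conjugate_self (CFC.sqrt_nonneg a).isSelfAdjoint
  refine .of_rightInvOn Complex.ofReal_re fun x hx ↦ ?_
  rcases eq_or_ne x 0 with rfl | hx0
  · simp
  have hx' : x ∈ spectrum ℂ (b * c * c) \ {0} := ⟨by rwa [mul_assoc, hcc], hx0⟩
  rw [spectrum.nonzero_mul_comm] at hx'
  simpa using hcbc.spectrumRestricts.rightInvOn hx'.1

end CStarAlgebra

variable {H : Type*} [NormedAddCommGroup H] [InnerProductSpace ℂ H] [CompleteSpace H]

theorem stmt18 (A B : H →L[ℂ] H)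
    (hA : A.IsPositive) (hB : IsSelfAdjoint B)
    (h : ∃ U ∈ unitary (H →L[ℂ] H), A * B = U * (B * A)) :
    A * B = B * A := by
  obtain ⟨U, hU, h⟩ := h
  have hstar : star (B * A) = A * B := by rw [star_mul, hA.isSelfAdjoint.star_eq, hB.star_eq]
  have : IsStarNormal (B * A) := .of_star_eq_unitary_mul hU (hstar.trans h)
  have hA₀ : 0 ≤ A := (ContinuousLinearMap.nonneg_iff_isPositive A).mpr hA
  have hBA : IsSelfAdjoint (B * A) := (hB.spectrumRestricts_mul_of_nonneg hA₀).isSelfAdjoint _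
  rw [← hstar, hBA.star_eq]
end
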